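/- arXiv:1701.04954 — 5 statements merged into one kernel-verified Lean document; each statement's English description precedes it below -/
import Mathlib

section
/- Let m, L, d be positive integers, let 0 ≤ w_s ≤ L, and set v = min{w_s, L−w_s}. Let D be the sum, over all m-tuples (u_1,…,u_m) of integers satisfying 0 ≤ u_i ≤ v for all i and 2(u_1+⋯+u_m) ≤ d−1, of ∏_{i=1}^m C(w_s,u_i)·C(L−w_s,u_i), where C(a,b) denotes the binomial coefficient. Then C(m,L,d,w_s) ≥ C(L,w_s)^m / D; that is, there exists an (m,L,d,w_s)-CSCC whose size is at least C(L,w_s)^m / D. -/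
open Finset Filter

/-- Weight (number of ones) of a binary word. -/
def wt {n : ℕ} (x : Fin n → Bool) : ℕ := (Finset.univ.filter fun i => x i = true).card

/-- The index (in a word of length `m * L`) of position `j` of subblock `i`. -/
def subIdx (m L : ℕ) (i : Fin m) (j : Fin L) : Fin (m * L) :=
  ⟨i.val * L + j.val, by
    have hj : j.val < L := j.isLt
    have hi : i.val + 1 ≤ m := i.isLt
    calc i.val * L + j.val < i.val * L + L := Nat.add_lt_add_left hj _
      _ = (i.val + 1) * L := by ring
      _ ≤ m * L := Nat.mul_le_mul hi (Nat.le_refl L)⟩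

/-- The `i`-th subblock (of length `L`) of a binary word of length `m * L`. -/
def subblock (m L : ℕ) (x : Fin (m * L) → Bool) (i : Fin m) : Fin L → Bool :=
  fun j => x (subIdx m L i j)

/-- The CSCC space: binary words of length `m * L` each of whose `m` subblocks of
length `L` has weight exactly `w`. -/
def CSCCspace (m L w : ℕ) : Set (Fin (m * L) → Bool) :=
  {x | ∀ i : Fin m, wt (subblock m L x i) = w}

/-- The SECC space: binary words of length `m * L` each of whose `m` subblocks of
length `L` has weight at least `w`. -/
def SECCspace (m L w : ℕ) : Set (Fin (m * L) → Bool) :=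
  {x | ∀ i : Fin m, w ≤ wt (subblock m L x i)}

/-- A code with minimum distance `d` inside the space `Sp`. -/
def isCode {n : ℕ} (Sp : Set (Fin n → Bool)) (d : ℕ) (C : Finset (Fin n → Bool)) : Prop :=
  (↑C : Set (Fin n → Bool)) ⊆ Sp ∧ ∀ x ∈ C, ∀ y ∈ C, x ≠ y → d ≤ hammingDist x y

/-- The ball of radius `t` around `x`, taken inside the space `Sp`. -/
def ball {n : ℕ} (Sp : Set (Fin n → Bool)) (x : Fin n → Bool) (t : ℕ) :
    Set (Fin n → Bool) :=
  {y | y ∈ Sp ∧ hammingDist x y ≤ t}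

/-- `C(m,L,d,w)`: the maximum size of an `(m,L,d,w)`-CSCC. -/
noncomputable def maxCSCC (m L d w : ℕ) : ℕ :=
  sSup {k | ∃ C : Finset (Fin (m * L) → Bool), isCode (CSCCspace m L w) d C ∧ C.card = k}

/-- `S(m,L,d,w)`: the maximum size of an `(m,L,d,w)`-SECC. -/
noncomputable def maxSECC (m L d w : ℕ) : ℕ :=
  sSup {k | ∃ C : Finset (Fin (m * L) → Bool), isCode (SECCspace m L w) d C ∧ C.card = k}

/-- `A(n,d,w)`: the maximum size of a constant weight code. -/
noncomputable def maxCWC (n d w : ℕ) : ℕ :=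
  sSup {k | ∃ C : Finset (Fin n → Bool), isCode {x | wt x = w} d C ∧ C.card = k}

/-- `H(n,d,w)`: the maximum size of a heavy weight code. -/
noncomputable def maxHWC (n d w : ℕ) : ℕ :=
  sSup {k | ∃ C : Finset (Fin n → Bool), isCode {x | w ≤ wt x} d C ∧ C.card = k}

/-- `A(n,d)`: the maximum size of a binary code of length `n` and distance `d`. -/
noncomputable def maxBinary (n d : ℕ) : ℕ :=
  sSup {k | ∃ C : Finset (Fin n → Bool),
    (∀ x ∈ C, ∀ y ∈ C, x ≠ y → d ≤ hammingDist x y) ∧ C.card = k}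

/-- `A_q(n,d)`: the maximum size of a `q`-ary code of length `n` and distance `d`. -/
noncomputable def maxQary (q n d : ℕ) : ℕ :=
  sSup {k | ∃ C : Finset (Fin n → Fin q),
    (∀ x ∈ C, ∀ y ∈ C, x ≠ y → d ≤ hammingDist x y) ∧ C.card = k}

/-- The size of a radius-`r` CSCC ball: the sum over all tuples `(u_1, …, u_m)` with
`0 ≤ u_i ≤ min{w, L-w}` and `2(u_1 + ⋯ + u_m) ≤ r` of `∏ i, C(w,u_i)·C(L-w,u_i)`. -/
def csccBallSize (m L w r : ℕ) : ℕ :=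
  ∑ u ∈ (Finset.univ : Finset (Fin m → Fin (min w (L - w) + 1))).filter
      (fun u => 2 * (∑ i, (u i : ℕ)) ≤ r),
    ∏ i, (w.choose (u i : ℕ)) * ((L - w).choose (u i : ℕ))

/-- The binary entropy function (base-2 logarithms, `h 0 = h 1 = 0`). -/
noncomputable def binent (p : ℝ) : ℝ :=
  -(p * Real.logb 2 p) - (1 - p) * Real.logb 2 (1 - p)

/-- The asymptotic CSCC rate `γ(L,δ,w/L)`. -/
noncomputable def gammaRate (L : ℕ) (δ : ℝ) (w : ℕ) : ℝ :=
  Filter.limsup (fun m : ℕ =>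
    Real.logb 2 (maxCSCC m L ⌊(m : ℝ) * L * δ⌋₊ w) / ((m : ℝ) * L)) Filter.atTop

/-- The asymptotic SECC rate `σ(L,δ,w/L)`. -/
noncomputable def sigmaRate (L : ℕ) (δ : ℝ) (w : ℕ) : ℝ :=
  Filter.limsup (fun m : ℕ =>
    Real.logb 2 (maxSECC m L ⌊(m : ℝ) * L * δ⌋₊ w) / ((m : ℝ) * L)) Filter.atTop

/-!
Gilbert–Varshamov argument: a largest code of minimum distance `d` in the CSCC space is covered
by the balls of radius `d - 1` around its codewords, so its size is at least the size
`C(L,w)^m` of the space divided by the size of a ball. Two words of equal weight `w` in a block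
of length `L` differ in `2u` positions, where `u ≤ min w (L - w)` ones of the first word are
turned into zeros and `u` zeros into ones; hence there are at most `C(w,u) C(L-w,u)` such words,
and multiplying over the blocks bounds a ball by `csccBallSize`.
-/

section Block

variable {L : ℕ}

lemma card_filter_wt_eq (w : ℕ) :
    #(univ.filter fun a : Fin L → Bool => wt a = w) = L.choose w := by
  rw [show L.choose w = #(powersetCard w (univ : Finset (Fin L))) by simp]
  refine card_nbij' (fun a => univ.filter fun j => a j = true) (fun s j => decide (j ∈ s))
    ?_ ?_ ?_ ?_ <;> intro _ h <;>
    simp only [mem_coe, mem_filter, mem_univ, true_and, mem_powersetCard] at h ⊢ <;>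
    simp_all [wt]

def flipDown (a b : Fin L → Bool) : Finset (Fin L) := univ.filter fun j => a j = true ∧ b j = false

def flipUp (a b : Fin L → Bool) : Finset (Fin L) := univ.filter fun j => a j = false ∧ b j = true

lemma hammingDist_eq_card_flipDown_add_card_flipUp (a b : Fin L → Bool) :
    hammingDist a b = #(flipDown a b) + #(flipUp a b) := by
  simp only [hammingDist, flipDown, flipUp, card_filter, ← sum_add_distrib]
  refine sum_congr rfl fun j _ => ?_
  cases a j <;> cases b j <;> rfl

lemma wt_add_card_flipUp (a b : Fin L → Bool) :
    wt a + #(flipUp a b) = wt b + #(flipDown a b) := by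
  simp only [wt, flipDown, flipUp, card_filter, ← sum_add_distrib]
  refine sum_congr rfl fun j _ => ?_
  cases a j <;> cases b j <;> rfl

lemma card_filter_eq_false (a : Fin L → Bool) :
    #(univ.filter fun j => a j = false) = L - wt a := by
  have : wt a + #(univ.filter fun j => a j = false) = L := by
    simp only [wt, Bool.eq_false_iff, ← card_fin L]
    exact card_filter_add_card_filter_not _
  omega

lemma card_flipDown_le (a b : Fin L → Bool) : #(flipDown a b) ≤ wt a :=
  card_le_card fun j hj => by simp_all [flipDown]

lemma card_flipUp_le (a b : Fin L → Bool) : #(flipUp a b) ≤ L - wt a := by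
  rw [← card_filter_eq_false]
  exact card_le_card fun j hj => by simp_all [flipUp]

lemma card_flipUp_eq_card_flipDown {a b : Fin L → Bool} (h : wt a = wt b) :
    #(flipUp a b) = #(flipDown a b) := by
  have := wt_add_card_flipUp a b
  omega

lemma hammingDist_eq_two_mul_card_flipDown {a b : Fin L → Bool} (h : wt a = wt b) :
    hammingDist a b = 2 * #(flipDown a b) := by
  rw [hammingDist_eq_card_flipDown_add_card_flipUp, card_flipUp_eq_card_flipDown h]
  ring

lemma card_flipDown_le_min {a b : Fin L → Bool} (h : wt a = wt b) :
    #(flipDown a b) ≤ min (wt a) (L - wt a) :=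
  le_min (card_flipDown_le a b) (card_flipUp_eq_card_flipDown h ▸ card_flipUp_le a b)

lemma apply_eq_ite_flip (a b : Fin L → Bool) (j : Fin L) :
    b j = if a j then decide (j ∉ flipDown a b) else decide (j ∈ flipUp a b) := by
  cases ha : a j <;> cases hb : b j <;> simp [flipDown, flipUp, ha, hb]

/-- Such a word `b` is determined by the `u` ones and the `u` zeros of `a` that it flips. -/
lemma card_filter_wt_eq_hammingDist_eq_le (a : Fin L → Bool) (u : ℕ) :
    #(univ.filter fun b => wt b = wt a ∧ hammingDist a b = 2 * u)
      ≤ (wt a).choose u * (L - wt a).choose u := by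
  calc _ ≤ #(powersetCard u (univ.filter fun j => a j = true) ×ˢ
          powersetCard u (univ.filter fun j => a j = false)) := by
        refine card_le_card_of_injOn (fun b => (flipDown a b, flipUp a b)) ?_ ?_
        · intro b hb
          simp only [mem_coe, mem_filter, mem_univ, true_and] at hb
          have hdown : #(flipDown a b) = u := by
            have := hammingDist_eq_two_mul_card_flipDown hb.1.symm
            omega
          have hup : #(flipUp a b) = u := card_flipUp_eq_card_flipDown hb.1.symm ▸ hdown
          simp only [mem_coe, mem_product, mem_powersetCard]
          exact ⟨⟨fun j hj => by simp_all [flipDown], hdown⟩,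
            ⟨fun j hj => by simp_all [flipUp], hup⟩⟩
        · intro b _ b' _ hbb'
          simp only [Prod.mk.injEq] at hbb'
          funext j
          rw [apply_eq_ite_flip a b, apply_eq_ite_flip a b', hbb'.1, hbb'.2]
    _ = (wt a).choose u * (L - wt a).choose u := by
        rw [card_product, card_powersetCard, card_powersetCard, card_filter_eq_false]
        rfl

end Block

section Subblocks

variable {m L w : ℕ}

lemma subIdx_eq_finProdFinEquiv (i : Fin m) (j : Fin L) :
    subIdx m L i j = finProdFinEquiv (i, j) := by
  ext
  simp only [subIdx, finProdFinEquiv_apply_val]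
  ring

def subblockEquiv (m L : ℕ) : (Fin (m * L) → Bool) ≃ (Fin m → Fin L → Bool) :=
  (finProdFinEquiv.arrowCongr (Equiv.refl Bool)).symm.trans (Equiv.curry _ _ _)

lemma subblockEquiv_apply (x : Fin (m * L) → Bool) : subblockEquiv m L x = subblock m L x := by
  funext i j
  simp [subblockEquiv, subblock, subIdx_eq_finProdFinEquiv]

lemma hammingDist_eq_sum_subblock (x y : Fin (m * L) → Bool) :
    hammingDist x y = ∑ i, hammingDist (subblock m L x i) (subblock m L y i) := by
  simp only [hammingDist, card_filter, subblock, subIdx_eq_finProdFinEquiv]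
  rw [← finProdFinEquiv.sum_comp, Fintype.sum_prod_type]

/-- The ball is covered by the products of spheres of radii `2 u_i`, where `u` runs over the
index tuples of `csccBallSize`. -/
lemma card_filter_sum_hammingDist_le_csccBallSize (a : Fin m → Fin L → Bool)
    (ha : ∀ i, wt (a i) = w) (r : ℕ) :
    #((Fintype.piFinset fun _ => univ.filter fun c : Fin L → Bool => wt c = w).filter
        fun b => ∑ i, hammingDist (a i) (b i) ≤ r) ≤ csccBallSize m L w r := by
  set T := (univ : Finset (Fin m → Fin (min w (L - w) + 1))).filter
    fun u => 2 * ∑ i, (u i : ℕ) ≤ r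
  have hcover : ((Fintype.piFinset fun _ => univ.filter fun c : Fin L → Bool => wt c = w).filter
        fun b => ∑ i, hammingDist (a i) (b i) ≤ r) ⊆ T.biUnion fun u => Fintype.piFinset
          fun i => univ.filter fun c => wt c = wt (a i) ∧ hammingDist (a i) c = 2 * u i := by
    intro b hb
    simp only [mem_filter, Fintype.mem_piFinset, mem_univ, true_and] at hb
    have hwt : ∀ i, wt (a i) = wt (b i) := fun i => (ha i).trans (hb.1 i).symm
    let u : Fin m → Fin (min w (L - w) + 1) := fun i =>
      ⟨#(flipDown (a i) (b i)), Nat.lt_succ_of_le (ha i ▸ card_flipDown_le_min (hwt i))⟩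
    have hdist : ∀ i, hammingDist (a i) (b i) = 2 * u i := fun i =>
      hammingDist_eq_two_mul_card_flipDown (hwt i)
    simp only [mem_biUnion, Fintype.mem_piFinset, mem_filter, mem_univ, true_and, T]
    refine ⟨u, ?_, fun i => ⟨(hwt i).symm, hdist i⟩⟩
    simpa only [mul_sum, ← hdist] using hb.2
  calc _ ≤ _ := card_le_card hcover
    _ ≤ _ := card_biUnion_le
    _ ≤ csccBallSize m L w r := by
      refine sum_le_sum fun u _ => ?_
      rw [Fintype.card_piFinset]
      refine prod_le_prod' fun i _ => ?_
      simpa only [ha i] using card_filter_wt_eq_hammingDist_eq_le (a i) (u i)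

def csccFinset (m L w : ℕ) : Finset (Fin (m * L) → Bool) :=
  univ.filter fun x => ∀ i, wt (subblock m L x i) = w

lemma coe_csccFinset : (csccFinset m L w : Set (Fin (m * L) → Bool)) = CSCCspace m L w := by
  ext
  simp [csccFinset, CSCCspace]

lemma card_csccFinset : #(csccFinset m L w) = L.choose w ^ m := by
  rw [card_equiv (subblockEquiv m L)
    (t := Fintype.piFinset fun _ => univ.filter fun c : Fin L → Bool => wt c = w)]
  · simp [Fintype.card_piFinset, card_filter_wt_eq]
  · simp [csccFinset, subblockEquiv_apply]

lemma card_filter_hammingDist_le_csccBallSize {x : Fin (m * L) → Bool}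
    (hx : x ∈ csccFinset m L w) (r : ℕ) :
    #((csccFinset m L w).filter fun y => hammingDist x y ≤ r) ≤ csccBallSize m L w r := by
  rw [card_equiv (subblockEquiv m L)]
  · exact card_filter_sum_hammingDist_le_csccBallSize _ (by simpa [csccFinset] using hx) r
  · simp [csccFinset, subblockEquiv_apply, hammingDist_eq_sum_subblock x]

end Subblocks

lemma isCode.insert {n d : ℕ} {Sp : Set (Fin n → Bool)} {C : Finset (Fin n → Bool)}
    (hC : isCode Sp d C) {z : Fin n → Bool} (hz : z ∈ Sp)
    (hfar : ∀ c ∈ C, d ≤ hammingDist c z) : isCode Sp d (insert z C) := by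
  refine ⟨by simpa [Set.insert_subset_iff] using ⟨hz, hC.1⟩, ?_⟩
  simp only [mem_insert]
  rintro x (rfl | hx) y (rfl | hy) hxy
  · exact absurd rfl hxy
  · exact hammingDist_comm y x ▸ hfar y hy
  · exact hfar x hx
  · exact hC.2 x hx y hy hxy

/-- Gilbert–Varshamov: by maximality, the balls of radius `d - 1` around the codewords of a
largest code in `S` cover `S`. -/
lemma exists_isCode_card_le_card_mul {n : ℕ} (S : Finset (Fin n → Bool)) (d D : ℕ)
    (hball : ∀ x ∈ S, #(S.filter fun y => hammingDist x y ≤ d - 1) ≤ D) :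
    ∃ C, isCode (S : Set (Fin n → Bool)) d C ∧ #S ≤ #C * D := by
  classical
  obtain ⟨C, hC, hmax⟩ := (univ.filter (isCode (S : Set (Fin n → Bool)) d)).exists_max_image
    card ⟨∅, by simp [isCode]⟩
  simp only [mem_filter, mem_univ, true_and] at hC hmax
  have hcover : S ⊆ C.biUnion fun c => S.filter fun y => hammingDist c y ≤ d - 1 := by
    intro z hz
    by_contra hfar
    simp only [mem_biUnion, mem_filter, not_exists, not_and, hz, true_and, not_le] at hfar
    have hzC : z ∉ C := fun hzC => by simpa using hfar z hzC
    have := hmax _ (hC.insert hz fun c hc => Nat.le_of_pred_lt (hfar c hc))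
    rw [card_insert_of_notMem hzC] at this
    omega
  refine ⟨C, hC, ?_⟩
  calc #S ≤ _ := card_le_card hcover
    _ ≤ ∑ c ∈ C, #(S.filter fun y => hammingDist c y ≤ d - 1) := card_biUnion_le
    _ ≤ ∑ _c ∈ C, D := sum_le_sum fun c hc => hball c (coe_subset.1 hC.1 hc)
    _ = #C * D := by rw [sum_const, smul_eq_mul]

lemma card_le_maxCSCC {m L d w : ℕ} {C : Finset (Fin (m * L) → Bool)}
    (hC : isCode (CSCCspace m L w) d C) : #C ≤ maxCSCC m L d w :=
  le_csSup ⟨2 ^ (m * L), by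
    rintro _ ⟨C', -, rfl⟩
    simpa using card_le_univ C'⟩ ⟨C, hC, rfl⟩

lemma one_le_csccBallSize (m L w r : ℕ) : 1 ≤ csccBallSize m L w r := by
  have hzero : (0 : Fin m → Fin (min w (L - w) + 1)) ∈
      (univ : Finset (Fin m → Fin (min w (L - w) + 1))).filter
        fun u => 2 * ∑ i, (u i : ℕ) ≤ r := by
    simp
  unfold csccBallSize
  simpa using single_le_sum (f := fun u : Fin m → Fin (min w (L - w) + 1) =>
    ∏ i, w.choose (u i) * (L - w).choose (u i)) (fun _ _ => Nat.zero_le _) hzero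

theorem stmt_1_general (m L d w : ℕ) :
    (∃ C : Finset (Fin (m * L) → Bool), isCode (CSCCspace m L w) d C ∧
      ((L.choose w : ℝ)) ^ m / (csccBallSize m L w (d - 1) : ℝ) ≤ C.card) ∧
    ((L.choose w : ℝ)) ^ m / (csccBallSize m L w (d - 1) : ℝ) ≤ maxCSCC m L d w := by
  obtain ⟨C, hC, hcard⟩ := exists_isCode_card_le_card_mul (csccFinset m L w) d
    (csccBallSize m L w (d - 1)) fun _ hx => card_filter_hammingDist_le_csccBallSize hx _
  rw [coe_csccFinset] at hC
  rw [card_csccFinset] at hcard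
  have hD : (0 : ℝ) < csccBallSize m L w (d - 1) := by
    exact_mod_cast one_le_csccBallSize m L w (d - 1)
  have hbound : (L.choose w : ℝ) ^ m / csccBallSize m L w (d - 1) ≤ #C := by
    rw [div_le_iff₀ hD]
    exact_mod_cast hcard
  exact ⟨⟨C, hC, hbound⟩, hbound.trans (by exact_mod_cast card_le_maxCSCC hC)⟩

/-- Gilbert–Varshamov bound for CSCCs: there is an `(m,L,d,w)`-CSCC of size at
least `C(L,w)^m / D`, where `D` is the radius-`(d-1)` CSCC ball size; consequently
`C(m,L,d,w) ≥ C(L,w)^m / D`. -/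
theorem stmt_1 (m L d w : ℕ) (hm : 0 < m) (hL : 0 < L) (hd : 0 < d) (hw : w ≤ L) :
    (∃ C : Finset (Fin (m * L) → Bool), isCode (CSCCspace m L w) d C ∧
      ((L.choose w : ℝ)) ^ m / (csccBallSize m L w (d - 1) : ℝ) ≤ C.card) ∧
    ((L.choose w : ℝ)) ^ m / (csccBallSize m L w (d - 1) : ℝ) ≤ maxCSCC m L d w :=
  stmt_1_general m L d w
end

section
/- Let m, L, d be positive integers, let 0 ≤ w_s ≤ L, set v = min{w_s, L−w_s} and t = ⌊(d−1)/2⌋. Let D_t be the sum, over all m-tuples (u_1,…,u_m) of integers satisfying 0 ≤ u_i ≤ v for all i and 2(u_1+⋯+u_m) ≤ t, of ∏_{i=1}^m C(w_s,u_i)·C(L−w_s,u_i), where C(a,b) denotes the binomial coefficient. Then every (m,L,d,w_s)-CSCC 𝒞 satisfies |𝒞|·D_t ≤ C(L,w_s)^m, i.e., C(m,L,d,w_s) ≤ C(L,w_s)^m / D_t. -/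
open Finset Filter

/-! Sphere packing: the balls of radius `t = ⌊(d-1)/2⌋` in the CSCC space around distinct
codewords are disjoint, and the space has `C(L,w)^m` words, so it suffices that every ball has
at least `D_t` words. Around a word `x`, flipping `u_i` ones and `u_i` zeros of each subblock `i`
of `x` gives a word of the space at distance `2 ∑ u_i` from `x`, and distinct choices of the
flipped positions give distinct words; this accounts for the factors `C(w,u_i)·C(L-w,u_i)`. -/

namespace CSCC

lemma card_mul_le_card_of_ball_le {ι : Type*} [Fintype ι] {β : ι → Type*}
    [∀ i, DecidableEq (β i)] {P C : Finset (∀ i, β i)} {t N : ℕ}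
    (hC : ∀ x ∈ C, ∀ y ∈ C, x ≠ y → 2 * t < hammingDist x y)
    (hN : ∀ x ∈ C, N ≤ #(P.filter fun y => hammingDist x y ≤ t)) :
    #C * N ≤ #P := by
  classical
  set ball := fun x => P.filter fun y => hammingDist x y ≤ t
  have hdisj : (C : Set (∀ i, β i)).PairwiseDisjoint ball := by
    intro x hx y hy hxy
    refine disjoint_left.2 fun z hzx hzy => ?_
    have hxz : hammingDist x z ≤ t := (mem_filter.1 hzx).2
    have hzy : hammingDist z y ≤ t := hammingDist_comm y z ▸ (mem_filter.1 hzy).2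
    have := hammingDist_triangle x z y
    have := hC x hx y hy hxy
    omega
  calc #C * N = ∑ _x ∈ C, N := by rw [sum_const, smul_eq_mul]
    _ ≤ ∑ x ∈ C, #(ball x) := sum_le_sum hN
    _ = #(C.biUnion ball) := (card_biUnion hdisj).symm
    _ ≤ #P := card_le_card (biUnion_subset.2 fun _ _ => filter_subset _ _)

lemma union_inter_eq_left_of_subset_of_disjoint {α : Type*} [DecidableEq α] {A B S : Finset α}
    (hA : A ⊆ S) (hB : Disjoint B S) : (A ∪ B) ∩ S = A := by
  rw [union_inter_distrib_right, inter_eq_left.2 hA, disjoint_iff_inter_eq_empty.1 hB,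
    union_empty]

lemma union_sdiff_eq_right_of_subset_of_disjoint {α : Type*} [DecidableEq α] {A B S : Finset α}
    (hA : A ⊆ S) (hB : Disjoint B S) : (A ∪ B) \ S = B := by
  rw [union_sdiff_distrib, sdiff_eq_empty_iff_subset.2 hA, hB.sdiff_eq_left, empty_union]

section Words

variable {n : ℕ}

def ones (z : Fin n → Bool) : Finset (Fin n) := univ.filter fun j => z j = true

def flipAt (z : Fin n → Bool) (F : Finset (Fin n)) : Fin n → Bool :=
  fun j => xor (z j) (decide (j ∈ F))

lemma wt_eq_card_ones (z : Fin n → Bool) : wt z = #(ones z) := rfl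

lemma card_filter_wt_eq (n w : ℕ) :
    #(univ.filter fun z : Fin n → Bool => wt z = w) = n.choose w := by
  rw [← card_fin n, ← card_powersetCard, card_fin]
  refine card_nbij' ones (fun T j => decide (j ∈ T)) ?_ ?_ ?_ ?_
  · intro z hz
    rw [mem_coe, mem_filter] at hz
    exact mem_powersetCard.2 ⟨subset_univ _, hz.2⟩
  · intro T hT
    rw [mem_coe, mem_powersetCard] at hT
    rw [mem_coe, mem_filter, wt_eq_card_ones]
    refine ⟨mem_univ _, ?_⟩
    simpa [ones] using hT.2
  · intro z _
    funext j
    simp [ones]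
  · intro T _
    ext j
    simp [ones]

lemma hammingDist_flipAt (z : Fin n → Bool) (F : Finset (Fin n)) :
    hammingDist z (flipAt z F) = #F := by
  rw [hammingDist]
  congr 1
  ext j
  rw [mem_filter, flipAt]
  cases z j <;> simp

lemma ones_flipAt (z : Fin n → Bool) (F : Finset (Fin n)) :
    ones (flipAt z F) = (ones z \ F) ∪ (F \ ones z) := by
  ext j
  cases hz : z j <;> by_cases hj : j ∈ F <;> simp [ones, flipAt, hz, hj]

lemma flipAt_injective (z : Fin n → Bool) : Function.Injective (flipAt z) := by
  intro F G h
  ext j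
  simpa [flipAt] using congrFun h j

lemma choose_mul_choose_le_card_sphere {z : Fin n → Bool} {w : ℕ} (hz : wt z = w) (u : ℕ) :
    w.choose u * (n - w).choose u ≤
      #(univ.filter fun y : Fin n → Bool => wt y = w ∧ hammingDist z y = 2 * u) := by
  set S := ones z
  have hS : #S = w := hz
  have hSc : #Sᶜ = n - w := by rw [card_compl, hS, Fintype.card_fin]
  rw [show w.choose u * (n - w).choose u = #(S.powersetCard u ×ˢ Sᶜ.powersetCard u) by
    rw [card_product, card_powersetCard, card_powersetCard, hS, hSc]]
  refine card_le_card_of_injOn (fun p => flipAt z (p.1 ∪ p.2)) ?_ ?_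
  · rintro ⟨A, B⟩ hAB
    simp only [mem_coe, mem_product, mem_powersetCard, subset_compl_iff_disjoint_right] at hAB
    obtain ⟨⟨hAS, hA⟩, hBS, hB⟩ := hAB
    have hSAB : S \ (A ∪ B) = S \ A := by
      rw [sdiff_union_distrib, hBS.symm.sdiff_eq_left, inter_eq_left.2 sdiff_subset]
    rw [mem_coe, mem_filter, wt_eq_card_ones, ones_flipAt, hammingDist_flipAt, hSAB,
      union_sdiff_eq_right_of_subset_of_disjoint hAS hBS,
      card_union_of_disjoint (hBS.symm.mono_left sdiff_subset),
      card_union_of_disjoint (hBS.symm.mono_left hAS), card_sdiff_of_subset hAS]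
    have := card_le_card hAS
    exact ⟨mem_univ _, by omega, by omega⟩
  · rintro ⟨A, B⟩ hAB ⟨A', B'⟩ hAB' h
    simp only [mem_coe, mem_product, mem_powersetCard, subset_compl_iff_disjoint_right]
      at hAB hAB'
    have hU : A ∪ B = A' ∪ B' := flipAt_injective z h
    refine Prod.ext ?_ ?_
    · rw [← union_inter_eq_left_of_subset_of_disjoint hAB.1.1 hAB.2.1, hU,
        union_inter_eq_left_of_subset_of_disjoint hAB'.1.1 hAB'.2.1]
    · rw [← union_sdiff_eq_right_of_subset_of_disjoint hAB.1.1 hAB.2.1, hU,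
        union_sdiff_eq_right_of_subset_of_disjoint hAB'.1.1 hAB'.2.1]

end Words

section Blocks

variable {m L w : ℕ}

lemma subIdx_eq_finProdFinEquiv (i : Fin m) (j : Fin L) :
    subIdx m L i j = finProdFinEquiv (i, j) := by
  ext
  simp only [subIdx, finProdFinEquiv_apply_val]
  ring

def blockEquiv (m L : ℕ) : (Fin (m * L) → Bool) ≃ (Fin m → Fin L → Bool) :=
  (finProdFinEquiv.arrowCongr (Equiv.refl Bool)).symm.trans (Equiv.curry _ _ _)

lemma blockEquiv_apply (x : Fin (m * L) → Bool) : blockEquiv m L x = subblock m L x := by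
  funext i j
  simp [blockEquiv, subblock, subIdx_eq_finProdFinEquiv]

lemma subblock_blockEquiv_symm (g : Fin m → Fin L → Bool) (i : Fin m) :
    subblock m L ((blockEquiv m L).symm g) i = g i := by
  rw [← blockEquiv_apply, Equiv.apply_symm_apply]

lemma hammingDist_eq_sum_subblock (x y : Fin (m * L) → Bool) :
    hammingDist x y = ∑ i, hammingDist (subblock m L x i) (subblock m L y i) := by
  simp only [hammingDist, card_filter]
  rw [← finProdFinEquiv.sum_comp, Fintype.sum_prod_type]
  simp [subblock, subIdx_eq_finProdFinEquiv]

def csccFinset (m L w : ℕ) : Finset (Fin (m * L) → Bool) :=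
  univ.filter fun x => ∀ i, wt (subblock m L x i) = w

lemma mem_csccFinset {x : Fin (m * L) → Bool} :
    x ∈ csccFinset m L w ↔ x ∈ CSCCspace m L w := by
  simp [csccFinset, CSCCspace]

lemma card_csccFinset (m L w : ℕ) : #(csccFinset m L w) = L.choose w ^ m := by
  rw [card_equiv (blockEquiv m L)
    (t := Fintype.piFinset fun _ => univ.filter fun z => wt z = w)]
  · rw [Fintype.card_piFinset, prod_const, card_univ, Fintype.card_fin, card_filter_wt_eq]
  · intro x
    simp [csccFinset, blockEquiv_apply]

lemma csccBallSize_le_card_ball {x : Fin (m * L) → Bool} (hx : x ∈ CSCCspace m L w) (t : ℕ) :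
    csccBallSize m L w t ≤ #((csccFinset m L w).filter fun y => hammingDist x y ≤ t) := by
  classical
  set U := (univ : Finset (Fin m → Fin (min w (L - w) + 1))).filter
    fun u => 2 * ∑ i, (u i : ℕ) ≤ t
  set sphere : Fin m → ℕ → Finset (Fin L → Bool) := fun i r =>
    univ.filter fun y => wt y = w ∧ hammingDist (subblock m L x i) y = r
  set shell := fun u : Fin m → Fin (min w (L - w) + 1) =>
    Fintype.piFinset fun i => sphere i (2 * u i)
  have hdisj : (U : Set _).PairwiseDisjoint shell := by
    intro u _ u' _ huu'
    refine disjoint_left.2 fun g hg hg' => huu' (funext fun i => Fin.ext ?_)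
    have := (mem_filter.1 (Fintype.mem_piFinset.1 hg i)).2.2
    have := (mem_filter.1 (Fintype.mem_piFinset.1 hg' i)).2.2
    omega
  have hmaps : Set.MapsTo (blockEquiv m L).symm (U.biUnion shell)
      ((csccFinset m L w).filter fun y => hammingDist x y ≤ t) := by
    intro g hg
    obtain ⟨u, hu, hgu⟩ := mem_biUnion.1 (mem_coe.1 hg)
    have hgi := fun i => (mem_filter.1 (Fintype.mem_piFinset.1 hgu i)).2
    refine mem_coe.2 <| mem_filter.2 ⟨mem_csccFinset.2 fun i => ?_, ?_⟩
    · rw [subblock_blockEquiv_symm]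
      exact (hgi i).1
    · simp only [hammingDist_eq_sum_subblock, subblock_blockEquiv_symm, (hgi _).2, ← mul_sum]
      exact (mem_filter.1 hu).2
  calc csccBallSize m L w t = ∑ u ∈ U, ∏ i, w.choose (u i) * (L - w).choose (u i) := rfl
    _ ≤ ∑ u ∈ U, ∏ i, #(sphere i (2 * u i)) := by
      gcongr with u _ i
      exact choose_mul_choose_le_card_sphere (hx i) _
    _ = #(U.biUnion shell) := by
      rw [card_biUnion hdisj]
      simp only [shell, Fintype.card_piFinset]
    _ ≤ _ := card_le_card_of_injOn _ hmaps (blockEquiv m L).symm.injective.injOn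

end Blocks

end CSCC

theorem stmt_2_general (m L d w : ℕ)
    (C : Finset (Fin (m * L) → Bool)) (hC : isCode (CSCCspace m L w) d C) :
    C.card * csccBallSize m L w ((d - 1) / 2) ≤ (L.choose w) ^ m := by
  have hsep : ∀ x ∈ C, ∀ y ∈ C, x ≠ y → 2 * ((d - 1) / 2) < hammingDist x y := by
    intro x hx y hy hxy
    have := hC.2 x hx y hy hxy
    have := hammingDist_pos.2 hxy
    omega
  rw [← CSCC.card_csccFinset]
  exact CSCC.card_mul_le_card_of_ball_le hsep fun x hx =>
    CSCC.csccBallSize_le_card_ball (hC.1 hx) _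

/-- Sphere-packing bound for CSCCs: every `(m,L,d,w)`-CSCC `C` satisfies
`|C| · D_t ≤ C(L,w)^m` where `t = ⌊(d-1)/2⌋` and `D_t` is the radius-`t` CSCC
ball size. -/
theorem stmt_2 (m L d w : ℕ) (hm : 0 < m) (hL : 0 < L) (hd : 0 < d) (hw : w ≤ L)
    (C : Finset (Fin (m * L) → Bool)) (hC : isCode (CSCCspace m L w) d C) :
    C.card * csccBallSize m L w ((d - 1) / 2) ≤ (L.choose w) ^ m :=
  stmt_2_general m L d w C hC
end

section
/- Let m, n, z be positive integers and let k_1,…,k_m be integers with 0 ≤ k_i ≤ n for all i and k_1+⋯+k_m = z. Then ∏_{i=1}^m C(n,k_i) ≤ C(n,⌊z/m⌋)^{m_1} · C(n,⌈z/m⌉)^{m−m_1}, where m_1 = m·⌈z/m⌉ − z and C(a,b) denotes the binomial coefficient. -/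
open Finset Filter

/-!
Binomial coefficients satisfy `C(n,a) C(n,b+2) ≤ C(n,a+1) C(n,b+1)` for `a ≤ b`. Hence moving
one unit from an entry `k j ≥ k i + 2` to `k i` keeps the sum, does not decrease
`∏ C(n, k i)`, and strictly decreases `∑ (k i)²`. Iterating, we reach a vector whose entries
differ by at most one; such a vector has `z % m` entries `z / m + 1` and the others `z / m`.
-/

theorem Nat.choose_mul_choose_add_two_le (n : ℕ) {a b : ℕ} (hab : a ≤ b) :
    n.choose a * n.choose (b + 2) ≤ n.choose (a + 1) * n.choose (b + 1) := by
  have key : (n - (b + 1)) * (a + 1) ≤ (n - a) * (b + 2) :=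
    Nat.mul_le_mul (by omega) (by omega)
  refine Nat.le_of_mul_le_mul_right ?_ (by positivity : 0 < (a + 1) * (b + 2))
  calc n.choose a * n.choose (b + 2) * ((a + 1) * (b + 2))
      = n.choose a * (n.choose (b + 1 + 1) * (b + 1 + 1)) * (a + 1) := by ring
    _ = n.choose a * n.choose (b + 1) * ((n - (b + 1)) * (a + 1)) := by
        rw [Nat.choose_succ_right_eq]; ring
    _ ≤ n.choose a * n.choose (b + 1) * ((n - a) * (b + 2)) := Nat.mul_le_mul_left _ key
    _ = n.choose (a + 1) * (a + 1) * n.choose (b + 1) * (b + 2) := by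
        rw [Nat.choose_succ_right_eq]; ring
    _ = n.choose (a + 1) * n.choose (b + 1) * ((a + 1) * (b + 2)) := by ring

section Smoothing

variable {ι M : Type*} [Fintype ι] [CommMonoid M]

def balancedProd (f : ℕ → M) (m z : ℕ) : M :=
  f (z / m) ^ (m - z % m) * f (z / m + 1) ^ (z % m)

theorem pow_floor_mul_pow_ceil_eq_balancedProd (f : ℕ → M) {m : ℕ} (hm : 0 < m) (z : ℕ) :
    f (z / m) ^ (m * ((z + m - 1) / m) - z) *
      f ((z + m - 1) / m) ^ (m - (m * ((z + m - 1) / m) - z)) = balancedProd f m z := by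
  obtain ⟨q, r, hr, rfl⟩ : ∃ q r, r < m ∧ z = m * q + r :=
    ⟨z / m, z % m, Nat.mod_lt _ hm, (Nat.div_add_mod z m).symm⟩
  have hdiv : (m * q + r) / m = q := by rw [Nat.mul_add_div hm, Nat.div_eq_of_lt hr, add_zero]
  have hmod : (m * q + r) % m = r := by rw [Nat.mul_add_mod, Nat.mod_eq_of_lt hr]
  rw [balancedProd, hdiv, hmod]
  rcases r.eq_zero_or_pos with rfl | hr₀
  · have hceil : (m * q + m - 1) / m = q := Nat.div_eq_of_lt_le
      (by rw [Nat.mul_comm q m]; omega) (by rw [add_mul, one_mul, Nat.mul_comm q m]; omega)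
    simp only [add_zero, hceil, Nat.sub_self, Nat.sub_zero, pow_zero, mul_one, one_mul]
  · have hceil : (m * q + r + m - 1) / m = q + 1 := Nat.div_eq_of_lt_le
      (by rw [add_mul, one_mul, Nat.mul_comm q m]; omega)
      (by rw [add_mul, add_mul, one_mul, Nat.mul_comm q m]; omega)
    rw [hceil, show m * (q + 1) - (m * q + r) = m - r by rw [Nat.mul_succ]; omega,
      Nat.sub_sub_self hr.le]

theorem prod_comp_eq_balancedProd_of_flat (f : ℕ → M) (k : ι → ℕ)
    (hflat : ∀ i j, k j ≤ k i + 1) :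
    ∏ i, f (k i) = balancedProd f (Fintype.card ι) (∑ i, k i) := by
  cases isEmpty_or_nonempty ι
  · simp [balancedProd]
  obtain ⟨i₀, hmin⟩ := Finite.exists_min k
  set a := k i₀
  have hk : ∀ i, k i = a + if k i = a + 1 then 1 else 0 := fun i => by
    have := hmin i; have := hflat i₀ i; split_ifs <;> omega
  have hc : #{i | k i = a + 1} < Fintype.card ι :=
    card_lt_card (filter_ssubset.2 ⟨i₀, mem_univ _, by omega⟩)
  have hsum : ∑ i, k i = Fintype.card ι * a + #{i | k i = a + 1} := by
    rw [sum_congr rfl fun i _ => hk i, sum_add_distrib, sum_boole]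
    simp [mul_comm]
  obtain ⟨hdiv, hmod⟩ := (Nat.div_mod_unique (a := ∑ i, k i) (d := a) (by omega)).2
    ⟨by rw [hsum, add_comm], hc⟩
  have hrest : #{i | ¬k i = a + 1} = Fintype.card ι - #{i | k i = a + 1} := by
    rw [← card_univ, ← card_filter_add_card_filter_not (s := univ) (fun i => k i = a + 1)]
    omega
  rw [balancedProd, hdiv, hmod, mul_comm, ← hrest, ← prod_const, ← prod_const, ← prod_ite]
  refine prod_congr rfl fun i _ => ?_
  split_ifs with h
  · rw [h]
  · rw [show k i = a by have := hmin i; have := hflat i₀ i; omega]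

variable [DecidableEq ι]

@[to_additive]
theorem Fintype.prod_eq_mul_mul_prod_compl_pair (g : ι → M) {i j : ι} (hij : i ≠ j) :
    ∏ x, g x = g i * g j * ∏ x ∈ {i, j}ᶜ, g x := by
  rw [← prod_pair hij, prod_mul_prod_compl]

def transfer (k : ι → ℕ) (i j : ι) : ι → ℕ :=
  Function.update (Function.update k i (k i + 1)) j (k j - 1)

@[to_additive]
theorem prod_comp_transfer (φ : ℕ → M) (k : ι → ℕ) {i j : ι} (hij : i ≠ j) :
    ∏ x, φ (transfer k i j x) = φ (k i + 1) * φ (k j - 1) * ∏ x ∈ {i, j}ᶜ, φ (k x) := by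
  rw [Fintype.prod_eq_mul_mul_prod_compl_pair _ hij]
  congr 1
  · simp [transfer, hij]
  · refine prod_congr rfl fun x hx => ?_
    simp only [mem_compl, mem_insert, mem_singleton, not_or] at hx
    simp [transfer, hx.1, hx.2]

theorem sum_transfer (k : ι → ℕ) {i j : ι} (hij : i ≠ j) (hj : 0 < k j) :
    ∑ x, transfer k i j x = ∑ x, k x := by
  have h := sum_comp_transfer id k hij
  simp only [id] at h
  rw [h, Fintype.sum_eq_add_add_sum_compl_pair k hij]
  omega

theorem sum_sq_transfer_lt (k : ι → ℕ) {i j : ι} (hij : i ≠ j) (hgap : k i + 1 < k j) :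
    ∑ x, transfer k i j x ^ 2 < ∑ x, k x ^ 2 := by
  rw [sum_comp_transfer (· ^ 2) k hij, Fintype.sum_eq_add_add_sum_compl_pair _ hij]
  obtain ⟨d, hd⟩ := Nat.exists_eq_add_of_lt hgap
  rw [hd, show k i + 1 + d + 1 - 1 = k i + 1 + d by omega]
  nlinarith

end Smoothing

theorem prod_comp_le_balancedProd {ι M : Type*} [Fintype ι] [CommMonoid M] [Preorder M]
    [MulRightMono M] {f : ℕ → M}
    (hf : ∀ a b, a ≤ b → f a * f (b + 2) ≤ f (a + 1) * f (b + 1)) (k : ι → ℕ) :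
    ∏ i, f (k i) ≤ balancedProd f (Fintype.card ι) (∑ i, k i) := by
  classical
  induction hN : ∑ i, k i ^ 2 using Nat.strong_induction_on generalizing k with
  | _ N ih =>
  by_cases hflat : ∀ i j, k j ≤ k i + 1
  · exact (prod_comp_eq_balancedProd_of_flat f k hflat).le
  push Not at hflat
  obtain ⟨i, j, hgap⟩ := hflat
  have hij : i ≠ j := by rintro rfl; omega
  have hpair : f (k i) * f (k j) ≤ f (k i + 1) * f (k j - 1) := by
    obtain ⟨b, hb⟩ : ∃ b, k j = b + 2 := ⟨k j - 2, by omega⟩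
    rw [hb, show b + 2 - 1 = b + 1 by omega]
    exact hf _ _ (by omega)
  calc ∏ x, f (k x) ≤ ∏ x, f (transfer k i j x) := by
        rw [Fintype.prod_eq_mul_mul_prod_compl_pair _ hij, prod_comp_transfer f k hij]
        exact mul_le_mul_left hpair _
    _ ≤ balancedProd f _ (∑ x, transfer k i j x) :=
        ih _ (hN ▸ sum_sq_transfer_lt k hij hgap) _ rfl
    _ = balancedProd f _ (∑ x, k x) := by rw [sum_transfer k hij (by omega)]

theorem stmt_10_general (m n z : ℕ)
    (k : Fin m → ℕ) (hsum : ∑ i, k i = z) :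
    ∏ i, n.choose (k i) ≤
      n.choose (z / m) ^ (m * ((z + m - 1) / m) - z) *
        n.choose ((z + m - 1) / m) ^ (m - (m * ((z + m - 1) / m) - z)) := by
  obtain rfl | hm := Nat.eq_zero_or_pos m
  · simp [← hsum]
  rw [pow_floor_mul_pow_ceil_eq_balancedProd _ hm, ← hsum]
  simpa using prod_comp_le_balancedProd (fun _ _ => Nat.choose_mul_choose_add_two_le n) k

/-- Log-concavity of binomial coefficients: if `0 ≤ k_i ≤ n` and `Σ k_i = z` then
`∏ C(n,k_i) ≤ C(n,⌊z/m⌋)^{m₁} · C(n,⌈z/m⌉)^{m-m₁}` with `m₁ = m⌈z/m⌉ - z`. -/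
theorem stmt_10 (m n z : ℕ) (hm : 0 < m) (hn : 0 < n) (hz : 0 < z)
    (k : Fin m → ℕ) (hk : ∀ i, k i ≤ n) (hsum : ∑ i, k i = z) :
    ∏ i, n.choose (k i) ≤
      n.choose (z / m) ^ (m * ((z + m - 1) / m) - z) *
        n.choose ((z + m - 1) / m) ^ (m - (m * ((z + m - 1) / m) - z)) :=
  stmt_10_general m n z k hsum
end

section
/- Let L and w_s be integers with 1 ≤ w_s ≤ L−1, and let k be an integer with 0 < k ≤ w_s(L−w_s)/L. Then C(w_s,k)·C(L−w_s,k) > C(w_s,k−1)·C(L−w_s,k−1), where C(a,b) denotes the binomial coefficient. -/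
open Finset Filter

/-- By `C(n, j + 1) (j + 1) = C(n, j) (n - j)`, the ratio of consecutive products is
`(a - j)(b - j) / (j + 1)²`. -/
theorem Nat.choose_mul_choose_lt_succ {a b j : ℕ} (h : (j + 1) * (j + 1) < (a - j) * (b - j)) :
    a.choose j * b.choose j < a.choose (j + 1) * b.choose (j + 1) := by
  have hja : j ≤ a := by
    by_contra! hlt
    simp [Nat.sub_eq_zero_of_le hlt.le] at h
  have hjb : j ≤ b := by
    by_contra! hlt
    simp [Nat.sub_eq_zero_of_le hlt.le] at h
  have hpos : 0 < a.choose j * b.choose j :=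
    Nat.mul_pos (Nat.choose_pos hja) (Nat.choose_pos hjb)
  have hratio : a.choose (j + 1) * b.choose (j + 1) * ((j + 1) * (j + 1))
      = a.choose j * b.choose j * ((a - j) * (b - j)) := by
    calc a.choose (j + 1) * b.choose (j + 1) * ((j + 1) * (j + 1))
        = (a.choose (j + 1) * (j + 1)) * (b.choose (j + 1) * (j + 1)) := by ring
      _ = (a.choose j * (a - j)) * (b.choose j * (b - j)) := by
        rw [Nat.choose_succ_right_eq, Nat.choose_succ_right_eq]
      _ = a.choose j * b.choose j * ((a - j) * (b - j)) := by ring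
  refine Nat.lt_of_mul_lt_mul_right (a := (j + 1) * (j + 1)) ?_
  rw [hratio]
  exact Nat.mul_lt_mul_of_pos_left h hpos

/-- Writing `a = j + 1 + a'`, `b = j + 1 + b'`, the hypothesis becomes `(j + 1)² ≤ a' b'`. -/
theorem succ_mul_succ_lt_sub_mul_sub {a b j : ℕ} (ha : 0 < a)
    (h : (j + 1) * (a + b) ≤ a * b) : (j + 1) * (j + 1) < (a - j) * (b - j) := by
  have hb : 0 < b := by
    by_contra! hb
    simp only [Nat.le_zero.mp hb, add_zero, mul_zero] at h
    nlinarith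
  have hja : j + 1 ≤ a := by
    by_contra! hlt
    nlinarith
  have hjb : j + 1 ≤ b := by
    by_contra! hlt
    nlinarith
  obtain ⟨a', rfl⟩ := Nat.exists_eq_add_of_le hja
  obtain ⟨b', rfl⟩ := Nat.exists_eq_add_of_le hjb
  rw [show j + 1 + a' - j = a' + 1 by omega, show j + 1 + b' - j = b' + 1 by omega]
  nlinarith

theorem Nat.mul_le_of_cast_le_div {k n m L : ℕ} (hL : 0 < L)
    (h : (k : ℝ) ≤ n * m / L) : k * L ≤ n * m := by
  have hL' : (0 : ℝ) < L := by exact_mod_cast hL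
  exact_mod_cast (le_div_iff₀ hL').mp h

/-- For `0 < k ≤ w(L-w)/L` the products `C(w,k)·C(L-w,k)` strictly increase in `k`. -/
theorem stmt_11 (L w k : ℕ) (hw1 : 1 ≤ w) (hw2 : w ≤ L - 1) (hk0 : 0 < k)
    (hk : (k : ℝ) ≤ (w : ℝ) * ((L : ℝ) - w) / L) :
    w.choose (k - 1) * (L - w).choose (k - 1) < w.choose k * (L - w).choose k := by
  obtain ⟨j, rfl⟩ : ∃ j, k = j + 1 := ⟨k - 1, by omega⟩
  have hsplit : L = w + (L - w) := by omega
  have hk' : (j + 1) * (w + (L - w)) ≤ w * (L - w) := by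
    rw [← hsplit]
    apply Nat.mul_le_of_cast_le_div (by omega)
    rwa [Nat.cast_sub (by omega)]
  simpa using Nat.choose_mul_choose_lt_succ (succ_mul_succ_lt_sub_mul_sub hw1 hk')
end

section
/- Let L be a positive integer and 0 ≤ w_s ≤ L an integer. Let x be a binary word of length L whose weight is at least w_s. Then the number of binary words y of length L with weight at least w_s and Hamming distance d(x,y) ∈ {1,2} is at least (L−w_s)(w_s+1). -/
open Finset Filter

/-!
A word at distance 1 or 2 from `x` is `x` with the bits of a set `T` of one or two positions
flipped. Flipping `T` brings the weight below `w` only if `T` consists of ones of `x` and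
`|T| > wt x - w`. Hence at most `W` one-sets (only when `W = w`) and at most `C(W,2)` two-sets
(only when `W ≤ w + 1`) are lost out of `L + C(L,2) = C(L+1,2)`, where `W = wt x`. In every case
at least `C(L+1,2) - C(w+1,2) = (w+1) + ⋯ + L ≥ (L-w)(w+1)` sets remain.
-/

open scoped symmDiff

section Flip

variable {ι : Type*} [DecidableEq ι]

def flipAt (x : ι → Bool) (T : Finset ι) : ι → Bool :=
  fun i => xor (x i) (decide (i ∈ T))

lemma flipAt_injective (x : ι → Bool) : Function.Injective (flipAt x) := by
  intro S T h
  ext i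
  simpa [flipAt] using congrFun h i

variable [Fintype ι]

lemma hammingDist_flipAt (x : ι → Bool) (T : Finset ι) : hammingDist x (flipAt x T) = #T := by
  unfold hammingDist
  congr 1
  ext i
  rw [mem_filter_univ]
  by_cases hi : i ∈ T <;> simp [flipAt, hi]

lemma filter_flipAt_eq_symmDiff (x : ι → Bool) (T : Finset ι) :
    ({i | flipAt x T i = true} : Finset ι) = ({i | x i = true} : Finset ι) ∆ T := by
  ext i
  by_cases hi : i ∈ T <;> cases x i <;> simp [flipAt, Finset.mem_symmDiff, hi]

end Flip

lemma Finset.card_symmDiff_add_two_mul_card_inter {α : Type*} [DecidableEq α]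
    (s t : Finset α) : #(s ∆ t) + 2 * #(s ∩ t) = #s + #t := by
  rw [symmDiff_eq_sup_sdiff_inf, sup_eq_union, inf_eq_inter,
    card_sdiff_of_subset inter_subset_union, ← card_union_add_card_inter]
  have := card_le_card (inter_subset_union (s := s) (t := t))
  omega

lemma subset_and_card_lt_of_card_symmDiff_lt {α : Type*} [DecidableEq α] {s t : Finset α}
    {w : ℕ} (ht : #t ≤ 2) (hw : w ≤ #s) (h : #(s ∆ t) < w) : t ⊆ s ∧ #s < w + #t := by
  have hcard := card_symmDiff_add_two_mul_card_inter s t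
  have hsub : t ⊆ s := by
    by_contra hts
    have : #(s ∩ t) < #t := card_lt_card
      ⟨inter_subset_right, fun h => hts (h.trans inter_subset_left)⟩
    omega
  rw [inter_eq_right.2 hsub] at hcard
  exact ⟨hsub, by omega⟩

lemma wt_le {n : ℕ} (x : Fin n → Bool) : wt x ≤ n :=
  (card_filter_le _ _).trans_eq (by simp)

lemma wt_flipAt {n : ℕ} (x : Fin n → Bool) (T : Finset (Fin n)) :
    wt (flipAt x T) = #(({i | x i = true} : Finset (Fin n)) ∆ T) := by
  rw [wt, filter_flipAt_eq_symmDiff]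

def heavyFlips {n : ℕ} (x : Fin n → Bool) (w k : ℕ) : Finset (Finset (Fin n)) :=
  {T ∈ powersetCard k univ | w ≤ wt (flipAt x T)}

lemma choose_le_card_heavyFlips_add {n : ℕ} (x : Fin n → Bool) {w k : ℕ}
    (hk : k ≤ 2) (hx : w ≤ wt x) :
    n.choose k ≤ #(heavyFlips x w k) + if wt x < w + k then (wt x).choose k else 0 := by
  have hlight : {T ∈ powersetCard k (univ : Finset (Fin n)) | ¬w ≤ wt (flipAt x T)} ⊆
      if wt x < w + k then powersetCard k {i | x i = true} else ∅ := by
    intro T hT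
    rw [mem_filter, mem_powersetCard] at hT
    obtain ⟨⟨-, hTk⟩, hlow⟩ := hT
    rw [wt_flipAt, not_le] at hlow
    obtain ⟨hTO, hlt⟩ := subset_and_card_lt_of_card_symmDiff_lt (hTk ▸ hk) hx hlow
    rw [if_pos (hTk ▸ hlt), mem_powersetCard]
    exact ⟨hTO, hTk⟩
  have hcard : #{T ∈ powersetCard k (univ : Finset (Fin n)) | ¬w ≤ wt (flipAt x T)} ≤
      if wt x < w + k then (wt x).choose k else 0 := by
    refine (card_le_card hlight).trans ?_
    split_ifs <;> simp [wt]
  have htotal := card_filter_add_card_filter_not (s := powersetCard k (univ : Finset (Fin n)))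
    (fun T => w ≤ wt (flipAt x T))
  rw [card_powersetCard, card_univ, Fintype.card_fin] at htotal
  rw [heavyFlips]
  omega

lemma Nat.succ_choose_two (n : ℕ) : (n + 1).choose 2 = n + n.choose 2 := by
  rw [Nat.choose_succ_succ', Nat.choose_one_right]

-- `C(L+1,2) - C(w+1,2) = (w+1) + ⋯ + L`, a sum of `L - w` terms each at least `w + 1`.
lemma sub_mul_succ_add_choose_le {w L : ℕ} (h : w ≤ L) :
    (L - w) * (w + 1) + (w + 1).choose 2 ≤ (L + 1).choose 2 := by
  induction L, h using Nat.le_induction with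
  | base => simp
  | succ L hL ih =>
    rw [Nat.succ_choose_two (L + 1), Nat.sub_add_comm hL, Nat.succ_mul]
    omega

lemma sub_mul_succ_add_ite_choose_le {w W L : ℕ} (hw : w ≤ W) (hW : W ≤ L) :
    (L - w) * (w + 1) + ((if W < w + 1 then W.choose 1 else 0) +
      if W < w + 2 then W.choose 2 else 0) ≤ L.choose 1 + L.choose 2 := by
  have key := sub_mul_succ_add_choose_le (hw.trans hW)
  rw [Nat.succ_choose_two w, Nat.succ_choose_two L] at key
  simp only [Nat.choose_one_right]
  rcases Nat.lt_trichotomy W (w + 1) with hlt | rfl | hgt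
  · obtain rfl : W = w := by omega
    simpa using key
  · rw [if_neg (lt_irrefl _), if_pos (by omega), Nat.succ_choose_two]
    omega
  · rw [if_neg (by omega), if_neg (by omega)]
    omega

theorem stmt_15_general (L w : ℕ)
    (x : Fin L → Bool) (hx : w ≤ wt x) :
    (L - w) * (w + 1) ≤
      {y : Fin L → Bool |
        w ≤ wt y ∧ (hammingDist x y = 1 ∨ hammingDist x y = 2)}.ncard := by
  have hdisj : Disjoint (heavyFlips x w 1) (heavyFlips x w 2) :=
    disjoint_filter_filter (pairwise_disjoint_powersetCard _ (by norm_num))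
  have hmaps : ↑((heavyFlips x w 1 ∪ heavyFlips x w 2).image (flipAt x)) ⊆
      {y : Fin L → Bool | w ≤ wt y ∧ (hammingDist x y = 1 ∨ hammingDist x y = 2)} := by
    intro y hy
    simp only [coe_image, Set.mem_image, mem_coe, mem_union, heavyFlips, mem_filter,
      mem_powersetCard] at hy
    obtain ⟨T, (⟨⟨-, hT⟩, hwt⟩ | ⟨⟨-, hT⟩, hwt⟩), rfl⟩ := hy <;>
      exact ⟨hwt, by simp [hammingDist_flipAt, hT]⟩
  calc (L - w) * (w + 1) ≤ #(heavyFlips x w 1) + #(heavyFlips x w 2) := by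
        have h1 := choose_le_card_heavyFlips_add x (k := 1) (by norm_num) hx
        have h2 := choose_le_card_heavyFlips_add x (k := 2) le_rfl hx
        have := sub_mul_succ_add_ite_choose_le hx (wt_le x)
        omega
    _ = #((heavyFlips x w 1 ∪ heavyFlips x w 2).image (flipAt x)) := by
        rw [card_image_of_injective _ (flipAt_injective x), card_union_of_disjoint hdisj]
    _ ≤ _ := by
        rw [← Set.ncard_coe_finset]
        exact Set.ncard_le_ncard hmaps

/-- If `x` has length `L` and weight at least `w`, then at least `(L-w)(w+1)` words
of length `L` and weight at least `w` lie at Hamming distance `1` or `2` from `x`. -/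
theorem stmt_15 (L w : ℕ) (hL : 0 < L) (hw : w ≤ L)
    (x : Fin L → Bool) (hx : w ≤ wt x) :
    (L - w) * (w + 1) ≤
      {y : Fin L → Bool |
        w ≤ wt y ∧ (hammingDist x y = 1 ∨ hammingDist x y = 2)}.ncard :=
  stmt_15_general L w x hx
end
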